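/- arXiv:1906.00991 — 2 statements merged into one kernel-verified Lean document; each statement's English description precedes it below -/
import Mathlib

section
/- Let 0 < β < α < 1 with α² + β² = 1. Upon a successful outcome of the filter, the assemblage Σ^(α) is mapped exactly onto the singlet assemblage: for all a, x ∈ {0,1}, K^(0) σ^(α)_{a|x} K^(0)† / Tr[K^(0) ρ_B K^(0)†] = σ^{Φ+}_{a|x}, where ρ_B = α²|0⟩⟨0| + β²|1⟩⟨1|. -/
open Matrix Finset
open scoped ComplexOrder

/-- Positive-semidefinite square root of a matrix (defined as `0` if the matrix
is not positive semidefinite). -/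
noncomputable def matSqrt {d : ℕ} (A : Matrix (Fin d) (Fin d) ℂ) :
    Matrix (Fin d) (Fin d) ℂ :=
  open Classical in
  if h : A.PosSemidef then
    (h.1.eigenvectorUnitary : Matrix (Fin d) (Fin d) ℂ) *
      diagonal ((↑) ∘ Real.sqrt ∘ h.1.eigenvalues) *
      (star h.1.eigenvectorUnitary : Matrix (Fin d) (Fin d) ℂ)
  else 0

/-- Fidelity between positive semidefinite matrices: `F(A,B) = Tr[√(√A · B · √A)]`. -/
noncomputable def mFid {d : ℕ} (A B : Matrix (Fin d) (Fin d) ℂ) : ℝ :=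
  (matSqrt (matSqrt A * B * matSqrt A)).trace.re

/-- The standard basis vector `|0⟩` of `ℂ²`. -/
def e0 : Fin 2 → ℂ := ![1, 0]

/-- The standard basis vector `|1⟩` of `ℂ²`. -/
def e1 : Fin 2 → ℂ := ![0, 1]

/-- The projector `|0⟩⟨0|`. -/
def P00 : Matrix (Fin 2) (Fin 2) ℂ := vecMulVec e0 (star e0)

/-- The projector `|1⟩⟨1|`. -/
def P11 : Matrix (Fin 2) (Fin 2) ℂ := vecMulVec e1 (star e1)

/-- The Kraus operator `K⁰ = (β/α)|0⟩⟨0| + |1⟩⟨1|` of the successful filter outcome. -/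
noncomputable def K0 (α β : ℝ) : Matrix (Fin 2) (Fin 2) ℂ :=
  ((β / α : ℝ) : ℂ) • P00 + P11

/-- The Kraus operator `K¹ = (√(α²−β²)/α)|0⟩⟨0|` of the failed filter outcome. -/
noncomputable def K1 (α β : ℝ) : Matrix (Fin 2) (Fin 2) ℂ :=
  ((Real.sqrt (α ^ 2 - β ^ 2) / α : ℝ) : ℂ) • P00

/-- Bob's reduced state `ρ_B = α²|0⟩⟨0| + β²|1⟩⟨1|` of the assemblage `Σ^(α)`. -/
noncomputable def ρB (α β : ℝ) : Matrix (Fin 2) (Fin 2) ℂ :=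
  ((α ^ 2 : ℝ) : ℂ) • P00 + ((β ^ 2 : ℝ) : ℂ) • P11

/-- The vector `|α₊⟩ = α|0⟩ + β|1⟩`. -/
def ketαp (α β : ℝ) : Fin 2 → ℂ := ![(α : ℂ), (β : ℂ)]

/-- The vector `|α₋⟩ = α|0⟩ − β|1⟩`. -/
def ketαm (α β : ℝ) : Fin 2 → ℂ := ![(α : ℂ), -(β : ℂ)]

/-- The vector `|+⟩ = (|0⟩+|1⟩)/√2`. -/
noncomputable def ketp : Fin 2 → ℂ :=
  ![(1 / Real.sqrt 2 : ℝ), (1 / Real.sqrt 2 : ℝ)]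

/-- The vector `|−⟩ = (|0⟩−|1⟩)/√2`. -/
noncomputable def ketm : Fin 2 → ℂ :=
  ![(1 / Real.sqrt 2 : ℝ), (-(1 / Real.sqrt 2) : ℝ)]

/-- The assemblage `Σ^(α)` with components `σ^(α)_{a|x}` (first index `a`, second `x`):
`σ^(α)_{0|0} = α²|0⟩⟨0|`, `σ^(α)_{1|0} = β²|1⟩⟨1|`,
`σ^(α)_{0|1} = ½|α₊⟩⟨α₊|`, `σ^(α)_{1|1} = ½|α₋⟩⟨α₋|`. -/
noncomputable def σα (α β : ℝ) (a x : Fin 2) : Matrix (Fin 2) (Fin 2) ℂ :=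
  if x = 0 then
    if a = 0 then ((α ^ 2 : ℝ) : ℂ) • P00 else ((β ^ 2 : ℝ) : ℂ) • P11
  else
    if a = 0 then (1 / 2 : ℂ) • vecMulVec (ketαp α β) (star (ketαp α β))
    else (1 / 2 : ℂ) • vecMulVec (ketαm α β) (star (ketαm α β))

/-- The singlet assemblage `Σ^{Φ⁺}` with components
`σ^{Φ⁺}_{0|0} = ½|0⟩⟨0|`, `σ^{Φ⁺}_{1|0} = ½|1⟩⟨1|`,
`σ^{Φ⁺}_{0|1} = ½|+⟩⟨+|`, `σ^{Φ⁺}_{1|1} = ½|−⟩⟨−|`. -/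
noncomputable def σΦ (a x : Fin 2) : Matrix (Fin 2) (Fin 2) ℂ :=
  if x = 0 then
    if a = 0 then (1 / 2 : ℂ) • P00 else (1 / 2 : ℂ) • P11
  else
    if a = 0 then (1 / 2 : ℂ) • vecMulVec ketp (star ketp)
    else (1 / 2 : ℂ) • vecMulVec ketm (star ketm)

/-!
The filter `K⁰` rescales `|0⟩` by `β/α` and fixes `|1⟩`. Hence it sends `α²|0⟩⟨0|` to
`β²|0⟩⟨0|` and `|α±⟩ = α|0⟩ ± β|1⟩` to `β(|0⟩ ± |1⟩) = β√2 |±⟩`, so that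
`K⁰ σ^(α)_{a|x} K⁰† = 2β² σ^{Φ⁺}_{a|x}` for all `a, x`. Since `ρ_B = σ^(α)_{0|0} + σ^(α)_{1|0}`
and `Tr[σ^{Φ⁺}_{0|0} + σ^{Φ⁺}_{1|0}] = 1`, the normalisation `Tr[K⁰ ρ_B K⁰†]` is exactly `2β²`.
-/

theorem Matrix.mul_vecMulVec_star_mul_conjTranspose {m n R : Type*} [Fintype n]
    [NonUnitalSemiring R] [StarRing R] (A : Matrix m n R) (u v : n → R) :
    A * vecMulVec u (star v) * Aᴴ = vecMulVec (A *ᵥ u) (star (A *ᵥ v)) := by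
  rw [mul_vecMulVec, vecMulVec_mul, vecMul_conjTranspose, star_star]

theorem Matrix.vecMulVec_ofReal_smul_star {n : Type*} (c : ℝ) (u : n → ℂ) :
    vecMulVec ((c : ℂ) • u) (star ((c : ℂ) • u)) = ((c ^ 2 : ℝ) : ℂ) • vecMulVec u (star u) := by
  rw [star_smul, Complex.star_def, Complex.conj_ofReal, smul_vecMulVec, vecMulVec_smul, smul_smul,
    ← Complex.ofReal_mul, ← sq]

section Filter

variable {α β : ℝ}

theorem K0_mulVec_e0 : K0 α β *ᵥ e0 = ((β / α : ℝ) : ℂ) • e0 := by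
  ext i; fin_cases i <;> simp [K0, P00, P11, e0, e1, vecMulVec, mulVec, dotProduct]

theorem K0_mulVec_e1 : K0 α β *ᵥ e1 = e1 := by
  ext i; fin_cases i <;> simp [K0, P00, P11, e0, e1, vecMulVec, mulVec, dotProduct]

theorem K0_mulVec_ketαp (hα : α ≠ 0) : K0 α β *ᵥ ketαp α β = ((β * √2 : ℝ) : ℂ) • ketp := by
  ext i; fin_cases i <;> simp [K0, P00, P11, e0, e1, ketαp, ketp, vecMulVec, mulVec, dotProduct, hα]

theorem K0_mulVec_ketαm (hα : α ≠ 0) : K0 α β *ᵥ ketαm α β = ((β * √2 : ℝ) : ℂ) • ketm := by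
  ext i; fin_cases i <;> simp [K0, P00, P11, e0, e1, ketαm, ketm, vecMulVec, mulVec, dotProduct, hα]

theorem K0_mul_σα_mul_conjTranspose (hα : α ≠ 0) (a x : Fin 2) :
    K0 α β * σα α β a x * (K0 α β)ᴴ = ((2 * β ^ 2 : ℝ) : ℂ) • σΦ a x := by
  have sandwich (c : ℂ) (u : Fin 2 → ℂ) : K0 α β * (c • vecMulVec u (star u)) * (K0 α β)ᴴ =
      c • vecMulVec (K0 α β *ᵥ u) (star (K0 α β *ᵥ u)) := by
    rw [Matrix.mul_smul, Matrix.smul_mul, mul_vecMulVec_star_mul_conjTranspose]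
  revert a x
  simp only [Fin.forall_fin_two, σα, σΦ, Fin.isValue, ↓reduceIte, one_ne_zero, P00, P11, sandwich,
    K0_mulVec_e0, K0_mulVec_e1, K0_mulVec_ketαp hα, K0_mulVec_ketαm hα,
    vecMulVec_ofReal_smul_star, smul_smul]
  rw [mul_pow, Real.sq_sqrt zero_le_two]
  refine ⟨⟨?_, ?_⟩, ?_, ?_⟩ <;> congr 1 <;> push_cast <;> field_simp

theorem ρB_eq_σα_add : ρB α β = σα α β 0 0 + σα α β 1 0 := by
  simp [ρB, σα]

theorem trace_σΦ_add : (σΦ 0 0 + σΦ 1 0).trace = 1 := by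
  simp only [σΦ, P00, P11, Fin.isValue, ↓reduceIte, one_ne_zero, trace_add, trace_smul,
    trace_vecMulVec]
  norm_num [e0, e1, dotProduct, Fin.sum_univ_two]

theorem trace_K0_mul_ρB_mul_conjTranspose (hα : α ≠ 0) :
    (K0 α β * ρB α β * (K0 α β)ᴴ).trace = ((2 * β ^ 2 : ℝ) : ℂ) := by
  rw [ρB_eq_σα_add, Matrix.mul_add, Matrix.add_mul, K0_mul_σα_mul_conjTranspose hα,
    K0_mul_σα_mul_conjTranspose hα, ← smul_add, trace_smul, trace_σΦ_add, smul_eq_mul, mul_one]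

end Filter

theorem successful_filter_yields_singlet_general (α β : ℝ) (hβ : 0 < β) (hβα : β < α) :
    ∀ a x : Fin 2,
      ((K0 α β * ρB α β * (K0 α β)ᴴ).trace)⁻¹ •
          (K0 α β * σα α β a x * (K0 α β)ᴴ) = σΦ a x := by
  intro a x
  have hα : α ≠ 0 := (hβ.trans hβα).ne'
  have hβ2 : ((2 * β ^ 2 : ℝ) : ℂ) ≠ 0 := by exact_mod_cast (by positivity)
  rw [trace_K0_mul_ρB_mul_conjTranspose hα, K0_mul_σα_mul_conjTranspose hα, smul_smul,
    inv_mul_cancel₀ hβ2, one_smul]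

/-- Upon a successful filter outcome, the assemblage `Σ^(α)` is mapped
exactly onto the singlet assemblage `Σ^{Φ⁺}`. -/
theorem successful_filter_yields_singlet (α β : ℝ) (hβ : 0 < β) (hβα : β < α)
    (hα : α < 1) (hnorm : α ^ 2 + β ^ 2 = 1) :
    ∀ a x : Fin 2,
      ((K0 α β * ρB α β * (K0 α β)ᴴ).trace)⁻¹ •
          (K0 α β * σα α β a x * (K0 α β)ᴴ) = σΦ a x :=
  successful_filter_yields_singlet_general α β hβ hβα
end

section
/- Let 1/√2 < α < 1, β = √(1−α²), N ≥ 2, and Δ = α² − β². Then ½(√(1 + Δ^N) + √(1 − Δ^N)) ≥ √(1 − ½Δ^{N−1}(α−β)²). -/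
lemma aux_F0_ge_F1 (x : ℝ) (hx0 : 0 ≤ x) (hx1 : x ≤ 1) (N : ℕ) (hN : 2 ≤ N) :
    1 / 2 * (Real.sqrt (1 + x ^ N) + Real.sqrt (1 - x ^ N)) ≥
      Real.sqrt (1 - 1 / 2 * x ^ (N - 1) * (1 - Real.sqrt (1 - x ^ 2))) := by
  set a := x ^ (N - 1) with hadef
  set s := Real.sqrt (1 - x ^ 2) with hsdef
  have ha0 : 0 ≤ a := pow_nonneg hx0 _
  have ha1 : a ≤ 1 := pow_le_one₀ hx0 hx1
  have hs0 : 0 ≤ s := Real.sqrt_nonneg _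
  have hssq : s ^ 2 = 1 - x ^ 2 := Real.sq_sqrt (by nlinarith)
  have hs1 : s ≤ 1 := by nlinarith
  have hxa : x ^ N = a * x := by
    rw [hadef, ← pow_succ]; congr 1; omega
  have hxN0 : 0 ≤ x ^ N := pow_nonneg hx0 _
  have hxN1 : x ^ N ≤ 1 := pow_le_one₀ hx0 hx1
  set u := Real.sqrt (1 + x ^ N) with hudef
  set v := Real.sqrt (1 - x ^ N) with hvdef
  set t := Real.sqrt (1 - (a * x) ^ 2) with htdef
  have hu2 : u ^ 2 = 1 + x ^ N := Real.sq_sqrt (by linarith)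
  have hv2 : v ^ 2 = 1 - x ^ N := Real.sq_sqrt (by linarith)
  have huv : u * v = t := by
    rw [hudef, hvdef, htdef, ← Real.sqrt_mul (by linarith)]
    congr 1
    rw [hxa]; ring
  have hkey : 1 - a * (1 - s) ≤ t := by
    rcases le_or_gt (1 - a * (1 - s)) 0 with h | h
    · exact le_trans h (Real.sqrt_nonneg _)
    · have hineq : (1 - a * (1 - s)) ^ 2 ≤ 1 - (a * x) ^ 2 := by
        nlinarith [mul_nonneg (mul_nonneg ha0 (by linarith : (0:ℝ) ≤ 1 - s))
          (by linarith : (0:ℝ) ≤ 1 - a), hssq, sq_nonneg a, sq_nonneg (a*s)]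
      calc 1 - a * (1 - s) = Real.sqrt ((1 - a * (1 - s)) ^ 2) :=
            (Real.sqrt_sq h.le).symm
        _ ≤ t := Real.sqrt_le_sqrt hineq
  have hL0 : 0 ≤ 1 / 2 * (u + v) := by positivity
  have hL2 : (1 / 2 * (u + v)) ^ 2 = (1 + t) / 2 := by
    linear_combination (1/4) * hu2 + (1/4) * hv2 + (1/2) * huv
  calc Real.sqrt (1 - 1 / 2 * a * (1 - s))
      ≤ Real.sqrt ((1 / 2 * (u + v)) ^ 2) := by
        apply Real.sqrt_le_sqrt
        rw [hL2]; linarith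
    _ = 1 / 2 * (u + v) := Real.sqrt_sq hL0

/-- With `Δ = α² − β²`,
`½(√(1 + Δ^N) + √(1 − Δ^N)) ≥ √(1 − ½Δ^{N−1}(α−β)²)`. -/
theorem F0_ge_F1 (α β : ℝ) (hα2 : 1 / Real.sqrt 2 < α) (hα : α < 1)
    (hβ : β = Real.sqrt (1 - α ^ 2)) (N : ℕ) (hN : 2 ≤ N) :
    1 / 2 * (Real.sqrt (1 + (α ^ 2 - β ^ 2) ^ N) +
        Real.sqrt (1 - (α ^ 2 - β ^ 2) ^ N)) ≥
      Real.sqrt (1 - 1 / 2 * (α ^ 2 - β ^ 2) ^ (N - 1) * (α - β) ^ 2) := by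
  have hs2 : (0:ℝ) < Real.sqrt 2 := Real.sqrt_pos.2 (by norm_num)
  have hα0 : 0 < α := lt_trans (by positivity) hα2
  have h1 : 1 < α * Real.sqrt 2 := by
    rw [div_lt_iff₀ hs2] at hα2; linarith
  have hs2sq : Real.sqrt 2 ^ 2 = 2 := Real.sq_sqrt (by norm_num)
  have hαsq : (1:ℝ) / 2 < α ^ 2 := by nlinarith
  have hβ2 : β ^ 2 = 1 - α ^ 2 := by
    rw [hβ]; exact Real.sq_sqrt (by nlinarith)
  have hβ0 : 0 ≤ β := hβ ▸ Real.sqrt_nonneg _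
  have hsum : α ^ 2 + β ^ 2 = 1 := by rw [hβ2]; ring
  have hx0 : 0 ≤ α ^ 2 - β ^ 2 := by nlinarith
  have hx1 : α ^ 2 - β ^ 2 ≤ 1 := by nlinarith
  have hseq : Real.sqrt (1 - (α ^ 2 - β ^ 2) ^ 2) = 2 * α * β := by
    rw [show (1:ℝ) - (α ^ 2 - β ^ 2) ^ 2 = (2 * α * β) ^ 2 from by
      linear_combination (-(1 + α ^ 2 + β ^ 2)) * hsum]
    exact Real.sqrt_sq (by positivity)
  have hab : (α - β) ^ 2 = 1 - Real.sqrt (1 - (α ^ 2 - β ^ 2) ^ 2) := by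
    rw [hseq]; linear_combination hsum
  rw [hab]
  exact aux_F0_ge_F1 _ hx0 hx1 N hN
end
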